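/- arXiv:2601.02741 — 7 statements merged into one kernel-verified Lean document; each statement's English description precedes it below -/
import Mathlib

section
/- Let α : A → B, β : A → C, f : B → D, g : C → D be ring homomorphisms between commutative rings forming a Cartesian square, and assume g : C → D is surjective. Let I ⊆ A be an ideal such that the induced ring homomorphism A/I → C/(Ideal.map β I) is injective. Then the induced square of quotient rings, with corners A/I, B/(Ideal.map α I), C/(Ideal.map β I), D/(Ideal.map (f ∘ α) I) and the induced homomorphisms, is again Cartesian; in particular the canonical map A/I → {(b̄, c̄) ∈ B/(Ideal.map α I) × C/(Ideal.map β I) | the two images in D/(Ideal.map (f ∘ α) I) agree} is bijective. -/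
/-!
A compatible pair `(b, c)` modulo `I` has `f b - g c ∈ I·D = g(I·C)`, so surjectivity of `g` lets
us move `c` within its class to make `(b, c)` compatible on the nose; the pair then comes from `A`.
Uniqueness is exactly the injectivity of `A/I → C/(I·C)`.
-/

theorem RingHom.exists_eq_and_sub_mem_of_sub_mem_map {A B C D : Type*} [CommRing A] [CommRing B]
    [CommRing C] [CommRing D] {α : A →+* B} {β : A →+* C} {f : B →+* D} {g : C →+* D}
    (hcart : ∀ (b : B) (c : C), f b = g c → ∃ a : A, α a = b ∧ β a = c)
    (hg : Function.Surjective g) {J : Ideal C} {b : B} {c : C} (h : f b - g c ∈ J.map g) :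
    ∃ a : A, α a = b ∧ β a - c ∈ J := by
  obtain ⟨j, hj, hgj⟩ := (Ideal.mem_map_iff_of_surjective g hg).mp h
  obtain ⟨a, rfl, hac⟩ := hcart b (c + j) (by rw [map_add, hgj]; ring)
  exact ⟨a, rfl, by rwa [hac, add_sub_cancel_left]⟩

/-- A Cartesian square of commutative rings with `g : C → D` surjective stays Cartesian
after quotienting by an ideal `I ⊆ A` (and its pushforwards along the maps of the square),
provided `A/I → C/(I·C)` is injective. Cartesianness is expressed by: for every compatible
pair of elements of the two quotients there is a unique element of `A/I` mapping to them. -/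
theorem cartesian_square_of_quotients
    {A B C D : Type*} [CommRing A] [CommRing B] [CommRing C] [CommRing D]
    (α : A →+* B) (β : A →+* C) (f : B →+* D) (g : C →+* D)
    (hcomm : f.comp α = g.comp β)
    (hcart : ∀ (b : B) (c : C), f b = g c → ∃! a : A, α a = b ∧ β a = c)
    (hg : Function.Surjective g)
    (I : Ideal A)
    (hinj : Function.Injective (Ideal.quotientMap (I.map β) β Ideal.le_comap_map)) :
    ∀ (b : B ⧸ I.map α) (c : C ⧸ I.map β),
      Ideal.quotientMap (I.map (f.comp α)) f
          (by rw [← Ideal.map_map]; exact Ideal.le_comap_map) b =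
        Ideal.quotientMap (I.map (f.comp α)) g
          (by rw [hcomm, ← Ideal.map_map]; exact Ideal.le_comap_map) c →
      ∃! a : A ⧸ I,
        Ideal.quotientMap (I.map α) α Ideal.le_comap_map a = b ∧
          Ideal.quotientMap (I.map β) β Ideal.le_comap_map a = c := by
  intro b c hfg
  obtain ⟨b, rfl⟩ := Ideal.Quotient.mk_surjective b
  obtain ⟨c, rfl⟩ := Ideal.Quotient.mk_surjective c
  rw [Ideal.quotientMap_mk, Ideal.quotientMap_mk, Ideal.Quotient.eq, hcomm,
    ← Ideal.map_map] at hfg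
  obtain ⟨a, rfl, hac⟩ :=
    RingHom.exists_eq_and_sub_mem_of_sub_mem_map (fun b c h ↦ (hcart b c h).exists) hg hfg
  have hβa : Ideal.quotientMap (I.map β) β Ideal.le_comap_map (Ideal.Quotient.mk I a) =
      Ideal.Quotient.mk _ c := by
    rwa [Ideal.quotientMap_mk, Ideal.Quotient.eq]
  exact ⟨Ideal.Quotient.mk I a, ⟨Ideal.quotientMap_mk, hβa⟩,
    fun a' ha' ↦ hinj (ha'.2.trans hβa.symm)⟩
end

section
/- Let R be a commutative ring, I a finitely generated ideal of R, J an index type, and (M_j)_{j ∈ J} a family of R-modules. Then the submodule I • (⊤ : Submodule R (Π_{j ∈ J} M_j)) of the product module equals the submodule of all elements m : Π_{j ∈ J} M_j such that m j ∈ I • (⊤ : Submodule R (M_j)) for every j ∈ J. -/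
/-! For a single scalar `a`, the submodule `a • ⊤` of a product is the product of the `a • ⊤`,
by choosing preimages componentwise. A finitely generated ideal `I = (a₁, …, aₙ)` gives
`I • N = ⨆ i, aᵢ • N`, and finite suprema of submodules commute with products: finitely many
componentwise decompositions assemble into a single decomposition in the product. -/

open Submodule Pointwise

theorem Submodule.pi_iSup_of_finite {R ι J : Type*} [Semiring R] [Finite ι] {M : J → Type*}
    [∀ j, AddCommMonoid (M j)] [∀ j, Module R (M j)] (p : ι → (j : J) → Submodule R (M j)) :
    pi Set.univ (fun j => ⨆ i, p i j) = ⨆ i, pi Set.univ (p i) := by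
  have := Fintype.ofFinite ι
  refine le_antisymm (fun x hx => ?_) (iSup_le fun i => pi_mono fun j _ => le_iSup (p · j) i)
  have hx_decomp (j : J) : ∃ y : (i : ι) → p i j, ∑ i, (y i : M j) = x j := by
    simpa using (mem_iSup_finset_iff_exists_sum (s := Finset.univ) (p · j) (x j)).1
      (by simpa using hx j trivial)
  choose y hy using hx_decomp
  have hx_sum : x = ∑ i, fun j => (y j i : M j) := by
    ext j
    simp [hy]
  rw [hx_sum]
  exact sum_mem fun i _ => mem_iSup_of_mem i fun j _ => (y j i).2

theorem Submodule.smul_top_pi {α R J : Type*} [Semiring R] [Monoid α] {M : J → Type*}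
    [∀ j, AddCommMonoid (M j)] [∀ j, Module R (M j)] [∀ j, DistribMulAction α (M j)]
    [∀ j, SMulCommClass α R (M j)] (a : α) :
    (a • ⊤ : Submodule R (∀ j, M j)) = pi Set.univ (fun j => a • (⊤ : Submodule R (M j))) := by
  ext x
  simp [mem_smul_pointwise_iff_exists, funext_iff, Classical.skolem]

/-- For a finitely generated ideal `I` of a commutative ring `R` and a family of
`R`-modules `(M j)`, the submodule `I • ⊤` of the product module `Π j, M j` is exactly the
submodule of elements all of whose components lie in `I • ⊤`. -/
theorem smul_top_pi_of_fg
    {R : Type*} [CommRing R] (I : Ideal R) (hI : I.FG)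
    {J : Type*} (M : J → Type*) [∀ j, AddCommGroup (M j)] [∀ j, Module R (M j)] :
    I • (⊤ : Submodule R (∀ j, M j)) =
      Submodule.pi Set.univ (fun j => I • (⊤ : Submodule R (M j))) := by
  obtain ⟨s, rfl⟩ := hI
  simp_rw [span_smul_eq, set_smul_eq_iSup, iSup_subtype', smul_top_pi]
  exact (pi_iSup_of_finite _).symm
end

section
/- Let R be a commutative ring, I a finitely generated ideal of R, J an index type, and (A_j)_{j ∈ J} a family of commutative R-algebras. Then for every natural number n the canonical ring homomorphism (Π_{j ∈ J} A_j) / (Iⁿ · Π_{j ∈ J} A_j) → Π_{j ∈ J} (A_j / (Iⁿ · A_j)) is bijective, where Iⁿ · A denotes the ideal of the R-algebra A generated by the image of Iⁿ. -/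
/-!
An element of `Π j, A j` lies in `Iⁿ · Π j, A j` as soon as each component lies in `Iⁿ · A j`:
`Iⁿ` has finitely many generators, and the coefficients expressing the components in terms of
them can be assembled componentwise. So the ideal `Iⁿ · Π j, A j` is the product ideal
`Π j, Iⁿ · A j`, which is exactly the kernel of the surjection `Π j, A j → Π j, A j / Iⁿ · A j`.
-/

namespace Ideal

variable {J : Type*} {A : J → Type*} [∀ j, Semiring (A j)]

theorem pi_span_range {ι : Type*} [Fintype ι] (g : ι → Π j, A j) :
    pi (fun j => span (Set.range fun i => g i j)) = span (Set.range g) := by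
  ext x
  simp only [mem_pi, mem_span_range_iff_exists_fun, Classical.skolem]
  constructor
  · rintro ⟨c, hc⟩
    exact ⟨fun i j => c j i, funext fun j => by simpa [Finset.sum_apply] using hc j⟩
  · rintro ⟨c, rfl⟩
    exact ⟨fun j i => c i j, fun j => by simp [Finset.sum_apply]⟩

theorem map_pi_of_fg {R : Type*} [Semiring R] {I : Ideal R} (hI : I.FG)
    (f : ∀ j, R →+* A j) :
    I.map (RingHom.pi f) = pi fun j => I.map (f j) := by
  obtain ⟨n, s, rfl⟩ := Submodule.fg_iff_exists_fin_generating_family.mp hI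
  simp only [map_span, ← Set.range_comp]
  exact (pi_span_range _).symm

end Ideal

/-- For a finitely generated ideal `I` of a commutative ring `R`, a family of commutative
`R`-algebras `(A j)` and `n : ℕ`, the canonical ring homomorphism
`(Π j, A j) / (Iⁿ · Π j, A j) → Π j, (A j / (Iⁿ · A j))` is bijective. -/
theorem quotient_pow_pi_bijective
    {R : Type*} [CommRing R] (I : Ideal R) (hI : I.FG)
    {J : Type*} (A : J → Type*) [∀ j, CommRing (A j)] [∀ j, Algebra R (A j)] (n : ℕ) :
    Function.Bijective
      (Ideal.Quotient.lift ((I ^ n).map (algebraMap R (∀ j, A j)))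
        (Pi.ringHom fun j =>
          (Ideal.Quotient.mk ((I ^ n).map (algebraMap R (A j)))).comp (Pi.evalRingHom A j))
        (by
          intro a ha
          have hj : ∀ j, a j ∈ (I ^ n).map (algebraMap R (A j)) := by
            intro j
            have h1 : Ideal.map (Pi.evalRingHom A j)
                (Ideal.map (algebraMap R (∀ j, A j)) (I ^ n)) ≤
                Ideal.map (algebraMap R (A j)) (I ^ n) := by
              rw [Ideal.map_map]
              exact le_of_eq (congrArg (Ideal.map · (I ^ n)) rfl)
            exact h1 (Ideal.mem_map_of_mem _ ha)
          funext j
          exact (Ideal.Quotient.eq_zero_iff_mem).mpr (hj j))) := by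
  have hpi : (I ^ n).map (algebraMap R (∀ j, A j)) =
      Ideal.pi fun j => (I ^ n).map (algebraMap R (A j)) :=
    Ideal.map_pi_of_fg hI.pow _
  refine ⟨RingHom.lift_injective_of_ker_le_ideal _ _ fun a ha => ?_,
    Ideal.Quotient.lift_surjective_of_surjective _ _
      (Function.Surjective.piMap fun j => Ideal.Quotient.mk_surjective)⟩
  rw [hpi]
  exact fun j => Ideal.Quotient.eq_zero_iff_mem.mp (congrFun ha j)
end

section
/- Let R be a commutative ring, I a finitely generated ideal of R, J an index type, and (M_j)_{j ∈ J} a family of R-modules each of which is I-adically complete. Then the product module Π_{j ∈ J} M_j is I-adically complete. -/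
/-!
The projections map `Iⁿ • ⊤` of the product into `Iⁿ • ⊤` of each factor, which already makes
the product Hausdorff. Gluing coordinatewise limits needs the reverse inclusion: writing each
coordinate as `∑ rᵢ • mᵢ` over a fixed finite generating family `rᵢ` of `Iⁿ`, the coordinatewise
coefficients `mᵢ` assemble into elements of the product.
-/

namespace Submodule

variable {R : Type*} [CommRing R]

theorem mem_span_range_smul_top_iff_exists_sum {M : Type*} [AddCommGroup M] [Module R M]
    {n : ℕ} (r : Fin n → R) (x : M) :
    x ∈ span R (Set.range r) • (⊤ : Submodule R M) ↔ ∃ m : Fin n → M, ∑ i, r i • m i = x := by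
  constructor
  · intro hx
    refine smul_induction_on hx ?_ ?_
    · intro a ha m _
      obtain ⟨c, rfl⟩ := (mem_span_range_iff_exists_fun R).mp ha
      exact ⟨fun i => c i • m, by simp [Finset.sum_smul, mul_smul, smul_comm (r _) (c _)]⟩
    · rintro _ _ ⟨m, rfl⟩ ⟨m', rfl⟩
      exact ⟨m + m', by simp [smul_add, Finset.sum_add_distrib]⟩
  · rintro ⟨m, rfl⟩
    exact Submodule.sum_mem _ fun i _ => smul_mem_smul (subset_span ⟨i, rfl⟩) trivial

variable {J : Type*} {M : J → Type*} [∀ j, AddCommGroup (M j)] [∀ j, Module R (M j)]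

theorem apply_mem_smul_top_of_mem_smul_top (K : Ideal R) {x : ∀ j, M j}
    (hx : x ∈ K • (⊤ : Submodule R (∀ j, M j))) (j : J) :
    x j ∈ K • (⊤ : Submodule R (M j)) :=
  smul_top_le_comap_smul_top K (LinearMap.proj j) hx

theorem mem_smul_top_of_forall_apply_mem {K : Ideal R} (hK : K.FG) {x : ∀ j, M j}
    (hx : ∀ j, x j ∈ K • (⊤ : Submodule R (M j))) :
    x ∈ K • (⊤ : Submodule R (∀ j, M j)) := by
  obtain ⟨n, r, rfl⟩ := fg_iff_exists_fin_generating_family.mp hK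
  simp only [mem_span_range_smul_top_iff_exists_sum] at hx ⊢
  choose m hm using hx
  exact ⟨fun i j => m j i, by ext j; simpa using hm j⟩

end Submodule

section

variable {R : Type*} [CommRing R] (I : Ideal R)
  {J : Type*} (M : J → Type*) [∀ j, AddCommGroup (M j)] [∀ j, Module R (M j)]

theorem IsHausdorff.pi [∀ j, IsHausdorff I (M j)] : IsHausdorff I (∀ j, M j) where
  haus' x hx := _root_.funext fun j => IsHausdorff.haus inferInstance (x j) fun n =>
    SModEq.zero.mpr <| Submodule.apply_mem_smul_top_of_mem_smul_top _ (SModEq.zero.mp (hx n)) j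

variable {I} in
theorem IsPrecomplete.pi (hI : I.FG) [∀ j, IsPrecomplete I (M j)] :
    IsPrecomplete I (∀ j, M j) where
  prec' f hf := by
    have hlim (j : J) : ∃ L : M j, ∀ n, f n j ≡ L [SMOD (I ^ n • ⊤ : Submodule R (M j))] :=
      IsPrecomplete.prec inferInstance fun hmn => SModEq.sub_mem.mpr <|
        Submodule.apply_mem_smul_top_of_mem_smul_top _ (SModEq.sub_mem.mp (hf hmn)) j
    choose L hL using hlim
    refine ⟨L, fun n => SModEq.sub_mem.mpr ?_⟩
    exact Submodule.mem_smul_top_of_forall_apply_mem hI.pow fun j => SModEq.sub_mem.mp (hL j n)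

end

/-- For a finitely generated ideal `I` of a commutative ring `R`, a product of
`I`-adically complete `R`-modules is `I`-adically complete. -/
theorem isAdicComplete_pi_of_fg
    {R : Type*} [CommRing R] (I : Ideal R) (hI : I.FG)
    {J : Type*} (M : J → Type*) [∀ j, AddCommGroup (M j)] [∀ j, Module R (M j)]
    [∀ j, IsAdicComplete I (M j)] :
    IsAdicComplete I (∀ j, M j) :=
  { IsHausdorff.pi I M, IsPrecomplete.pi M hI with }
end

section
/- Let α : A → B, β : A → C, f : B → D, g : C → D be ring homomorphisms between commutative rings forming a Cartesian square. Let a₀ ∈ A and set b₀ = α(a₀), c₀ = β(a₀), d₀ = f(b₀). Then the induced square of localizations A[1/a₀], B[1/b₀], C[1/c₀], D[1/d₀] (with the ring homomorphisms induced by α, β, f, g) is again Cartesian; in particular the canonical map A[1/a₀] → {(x, y) ∈ B[1/b₀] × C[1/c₀] | x and y have equal images in D[1/d₀]} is bijective. -/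
private lemma cast_away_mul {D : Type*} [CommRing D] {d d' : D} (h : d = d')
    (u v : Localization.Away d) :
    cast (congrArg (fun d => Localization.Away d) h) (u * v) =
      cast (congrArg (fun d => Localization.Away d) h) u *
        cast (congrArg (fun d => Localization.Away d) h) v := by
  subst h; rfl

private lemma cast_away_algebraMap {D : Type*} [CommRing D] {d d' : D} (h : d = d') (t : D) :
    cast (congrArg (fun d => Localization.Away d) h) (algebraMap D (Localization.Away d) t) =
      algebraMap D (Localization.Away d') t := by
  subst h; rfl


/-- A Cartesian square of commutative rings stays Cartesian after localizing away from an
element `a₀ : A` (and its images `α a₀`, `β a₀`, `f (α a₀)`). Cartesianness is expressed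
by: for every compatible pair of elements of the two localizations there is a unique
element of `A[1/a₀]` mapping to them. -/
theorem cartesian_square_of_localizations_away
    {A B C D : Type*} [CommRing A] [CommRing B] [CommRing C] [CommRing D]
    (α : A →+* B) (β : A →+* C) (f : B →+* D) (g : C →+* D)
    (hcomm : f.comp α = g.comp β)
    (hcart : ∀ (b : B) (c : C), f b = g c → ∃! a : A, α a = b ∧ β a = c)
    (a₀ : A) :
    ∀ (x : Localization.Away (α a₀)) (y : Localization.Away (β a₀)),
      Localization.awayMap f (α a₀) x =
        cast (congrArg (fun d => Localization.Away d)
            (RingHom.congr_fun hcomm a₀).symm)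
          (Localization.awayMap g (β a₀) y) →
      ∃! z : Localization.Away a₀,
        Localization.awayMap α a₀ z = x ∧ Localization.awayMap β a₀ z = y := by
  intro x y hxy
  have e : f (α a₀) = g (β a₀) := RingHom.congr_fun hcomm a₀
  obtain ⟨⟨b, s⟩, hx⟩ := IsLocalization.surj (Submonoid.powers (α a₀)) x
  obtain ⟨m, hm⟩ := s.2
  have hm' : α a₀ ^ m = (s : B) := hm
  obtain ⟨⟨c, t⟩, hy⟩ := IsLocalization.surj (Submonoid.powers (β a₀)) y
  obtain ⟨n, hn⟩ := t.2
  have hn' : β a₀ ^ n = (t : C) := hn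
  dsimp only at hx hy
  -- image of hx under awayMap f
  have hfx : Localization.awayMap f (α a₀) x
      * algebraMap D (Localization.Away (f (α a₀))) (f (α a₀) ^ m)
      = algebraMap D _ (f b) := by
    have h1 := congrArg (Localization.awayMap f (α a₀)) hx
    rw [map_mul] at h1
    rw [Localization.awayMap, IsLocalization.Away.map] at h1
    rw [IsLocalization.map_eq, IsLocalization.map_eq] at h1
    rw [← hm', map_pow] at h1
    exact h1
  -- image of hy under awayMap g, transported by the cast
  have hgy : Localization.awayMap f (α a₀) x
      * algebraMap D (Localization.Away (f (α a₀))) (f (α a₀) ^ n)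
      = algebraMap D _ (g c) := by
    have h1 := congrArg (Localization.awayMap g (β a₀)) hy
    rw [map_mul] at h1
    rw [Localization.awayMap, IsLocalization.Away.map] at h1
    rw [IsLocalization.map_eq, IsLocalization.map_eq] at h1
    rw [← hn', map_pow] at h1
    have h2 := congrArg (cast (congrArg (fun d => Localization.Away d) e.symm)) h1
    rw [cast_away_mul e.symm, cast_away_algebraMap e.symm, cast_away_algebraMap e.symm] at h2
    rw [show g (β a₀) ^ n = f (α a₀) ^ n from by rw [e]] at h2
    rw [hxy]
    exact h2
  -- clear denominators in D
  have key : algebraMap D (Localization.Away (f (α a₀))) (f b * f (α a₀) ^ n)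
      = algebraMap D _ (g c * f (α a₀) ^ m) := by
    rw [map_mul, map_mul, ← hfx, ← hgy]; ring
  obtain ⟨u, hu⟩ := (IsLocalization.eq_iff_exists (Submonoid.powers (f (α a₀)))
      (Localization.Away (f (α a₀)))).mp key
  obtain ⟨k, hk⟩ := u.2
  have hk' : f (α a₀) ^ k = (u : D) := hk
  rw [← hk'] at hu
  -- the compatible pair in B × C
  have key2 : f (α a₀ ^ (k + n) * b) = g (β a₀ ^ (k + m) * c) := by
    simp only [map_mul, map_pow]
    rw [show g (β a₀) ^ (k + m) = f (α a₀) ^ (k + m) from by rw [e]]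
    linear_combination hu
  obtain ⟨a, ⟨ha1, ha2⟩, -⟩ := hcart _ _ key2
  set K := k + n + m with hK
  set z : Localization.Away a₀ :=
    IsLocalization.mk' (Localization.Away a₀) a (⟨a₀ ^ K, K, rfl⟩ : Submonoid.powers a₀) with hz
  have hzspec : z * algebraMap A (Localization.Away a₀) (a₀ ^ K) = algebraMap A _ a :=
    IsLocalization.mk'_spec _ a (⟨a₀ ^ K, K, rfl⟩ : Submonoid.powers a₀)
  -- z maps to x
  have hxz : Localization.awayMap α a₀ z = x := by
    have U : IsUnit (algebraMap B (Localization.Away (α a₀)) (α a₀ ^ K)) :=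
      IsLocalization.map_units _ (⟨α a₀ ^ K, K, rfl⟩ : Submonoid.powers (α a₀))
    apply U.mul_right_cancel
    have lhs : Localization.awayMap α a₀ z * algebraMap B (Localization.Away (α a₀)) (α a₀ ^ K)
        = algebraMap B (Localization.Away (α a₀)) (α a₀ ^ (k + n) * b) := by
      have h1 := congrArg (Localization.awayMap α a₀) hzspec
      rw [map_mul, Localization.awayMap, IsLocalization.Away.map,
        IsLocalization.map_eq, IsLocalization.map_eq, map_pow, ha1] at h1
      exact h1
    have rhs : x * algebraMap B (Localization.Away (α a₀)) (α a₀ ^ K)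
        = algebraMap B (Localization.Away (α a₀)) (α a₀ ^ (k + n) * b) := by
      rw [show (α a₀ : B) ^ K = (s : B) * α a₀ ^ (k + n) from by rw [← hm', hK]; ring,
        map_mul, ← mul_assoc, hx, ← map_mul, mul_comm b]
    rw [lhs, rhs]
  -- z maps to y
  have hyz : Localization.awayMap β a₀ z = y := by
    have U : IsUnit (algebraMap C (Localization.Away (β a₀)) (β a₀ ^ K)) :=
      IsLocalization.map_units _ (⟨β a₀ ^ K, K, rfl⟩ : Submonoid.powers (β a₀))
    apply U.mul_right_cancel
    have lhs : Localization.awayMap β a₀ z * algebraMap C (Localization.Away (β a₀)) (β a₀ ^ K)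
        = algebraMap C (Localization.Away (β a₀)) (β a₀ ^ (k + m) * c) := by
      have h1 := congrArg (Localization.awayMap β a₀) hzspec
      rw [map_mul, Localization.awayMap, IsLocalization.Away.map,
        IsLocalization.map_eq, IsLocalization.map_eq, map_pow, ha2] at h1
      exact h1
    have rhs : y * algebraMap C (Localization.Away (β a₀)) (β a₀ ^ K)
        = algebraMap C (Localization.Away (β a₀)) (β a₀ ^ (k + m) * c) := by
      rw [show (β a₀ : C) ^ K = (t : C) * β a₀ ^ (k + m) from by rw [← hn', hK]; ring,
        map_mul, ← mul_assoc, hy, ← map_mul, mul_comm c]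
    rw [lhs, rhs]
  refine ⟨z, ⟨hxz, hyz⟩, ?_⟩
  -- uniqueness
  rintro z' ⟨hx', hy'⟩
  have hα0 : Localization.awayMap α a₀ (z' - z) = 0 := by rw [map_sub, hx', hxz, sub_self]
  have hβ0 : Localization.awayMap β a₀ (z' - z) = 0 := by rw [map_sub, hy', hyz, sub_self]
  obtain ⟨⟨p, q⟩, hw⟩ := IsLocalization.surj (Submonoid.powers a₀) (z' - z)
  dsimp only at hw
  have hαp : algebraMap B (Localization.Away (α a₀)) (α p) = 0 := by
    have h1 := congrArg (Localization.awayMap α a₀) hw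
    rw [map_mul, hα0, zero_mul, Localization.awayMap, IsLocalization.Away.map,
      IsLocalization.map_eq] at h1
    exact h1.symm
  have hβp : algebraMap C (Localization.Away (β a₀)) (β p) = 0 := by
    have h1 := congrArg (Localization.awayMap β a₀) hw
    rw [map_mul, hβ0, zero_mul, Localization.awayMap, IsLocalization.Away.map,
      IsLocalization.map_eq] at h1
    exact h1.symm
  obtain ⟨u1, hu1⟩ := (IsLocalization.map_eq_zero_iff (Submonoid.powers (α a₀)) _ _).mp hαp
  obtain ⟨k1, hk1⟩ := u1.2
  have hk1' : α a₀ ^ k1 = (u1 : B) := hk1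
  rw [← hk1'] at hu1
  obtain ⟨u2, hu2⟩ := (IsLocalization.map_eq_zero_iff (Submonoid.powers (β a₀)) _ _).mp hβp
  obtain ⟨k2, hk2⟩ := u2.2
  have hk2' : β a₀ ^ k2 = (u2 : C) := hk2
  rw [← hk2'] at hu2
  have hA : a₀ ^ (k1 + k2) * p = 0 := by
    obtain ⟨a'', -, huniq⟩ := hcart 0 0 (by simp)
    have h1 : α (a₀ ^ (k1 + k2) * p) = 0 := by
      simp only [map_mul, map_pow]
      linear_combination (α a₀) ^ k2 * hu1
    have h2 : β (a₀ ^ (k1 + k2) * p) = 0 := by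
      simp only [map_mul, map_pow]
      linear_combination (β a₀) ^ k1 * hu2
    have e1 := huniq _ ⟨h1, h2⟩
    have e2 := huniq 0 (by simp)
    exact e1.trans e2.symm
  have hp0 : algebraMap A (Localization.Away a₀) p = 0 := by
    rw [IsLocalization.map_eq_zero_iff (Submonoid.powers a₀)]
    exact ⟨⟨a₀ ^ (k1 + k2), _, rfl⟩, hA⟩
  have U : IsUnit (algebraMap A (Localization.Away a₀) (q : A)) :=
    IsLocalization.map_units _ q
  have hfin : z' - z = 0 := by
    have : (z' - z) * algebraMap A (Localization.Away a₀) (q : A)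
        = 0 * algebraMap A (Localization.Away a₀) (q : A) := by
      rw [hw, hp0, zero_mul]
    exact U.mul_right_cancel this
  exact sub_eq_zero.mp hfin
end

section
/- Let V be a valuation ring (an integral domain in which for all a, b, a divides b or b divides a) whose fraction field K is algebraically closed. Then V is a henselian local ring and its residue field is algebraically closed; that is, V is strictly henselian. -/
/-!
Roots in `K` of a monic polynomial over `V` are integral over `V`, hence lie in `V` because a
valuation ring is integrally closed; so every monic polynomial over `V` splits into linear factors
already over `V`. Henselianity follows since `f(a₀) = ∏ (a₀ - aᵢ)` lies in the prime ideal `𝔪`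
only if some root `aᵢ` is congruent to `a₀`, and the residue field is algebraically closed since
every monic polynomial over it lifts to a monic polynomial over `V`.
-/

open Polynomial IsLocalRing

theorem Polynomial.Monic.splits_of_isAlgClosed_fractionRing {R : Type*} (K : Type*)
    [CommRing R] [IsDomain R] [IsIntegrallyClosed R]
    [Field K] [Algebra R K] [IsFractionRing R K] [IsAlgClosed K]
    {f : R[X]} (hf : f.Monic) : f.Splits := by
  refine Splits.of_splits_map_of_injective (IsFractionRing.injective R K)
    (IsAlgClosed.splits _) fun x hx ↦ IsIntegrallyClosed.isIntegral_iff.mp ?_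
  exact ⟨f, hf, by rw [← eval_map]; exact isRoot_of_mem_roots hx⟩

theorem HenselianLocalRing.of_forall_monic_splits {R : Type*} [CommRing R] [IsLocalRing R]
    (h : ∀ f : R[X], f.Monic → f.Splits) : HenselianLocalRing R where
  is_henselian f hf a₀ hfa₀ _ := by
    obtain ⟨s, hs⟩ := splits_iff_exists_multiset.mp (h f hf)
    rw [hf.leadingCoeff, C_1, one_mul] at hs
    have heval : f.eval a₀ = (s.map (a₀ - ·)).prod := by
      rw [hs, eval_multiset_prod, Multiset.map_map]
      simp
    rw [heval, (maximalIdeal.isMaximal R).isPrime.multiset_prod_mem_iff_exists_mem] at hfa₀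
    obtain ⟨_, hmem, ha⟩ := hfa₀
    obtain ⟨a, has, rfl⟩ := Multiset.mem_map.mp hmem
    refine ⟨a, ?_, by simpa using neg_mem ha⟩
    obtain ⟨t, rfl⟩ := Multiset.exists_cons_of_mem has
    simp [IsRoot, hs]

theorem IsAlgClosed.of_surjective_of_forall_monic_splits {R k : Type*} [CommRing R] [Field k]
    {φ : R →+* k} (hφ : Function.Surjective φ) (h : ∀ f : R[X], f.Monic → f.Splits) :
    IsAlgClosed k := by
  refine of_exists_root _ fun p hp hirr ↦ ?_
  obtain ⟨F, rfl, -, hF⟩ := lifts_and_degree_eq_and_monic (mem_lifts_of_surjective hφ p) hp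
  exact ((h F hF).map φ).exists_eval_eq_zero (degree_pos_of_irreducible hirr).ne'

/-- A valuation ring whose fraction field is algebraically closed is strictly henselian:
it is a henselian local ring and its residue field is algebraically closed. -/
theorem valuationRing_strictly_henselian_of_algClosed_fractionField
    {V K : Type*} [CommRing V] [IsDomain V] [ValuationRing V]
    [Field K] [Algebra V K] [IsFractionRing V K] [IsAlgClosed K] :
    HenselianLocalRing V ∧ IsAlgClosed (IsLocalRing.ResidueField V) := by
  have hsplits (f : V[X]) (hf : f.Monic) : f.Splits := hf.splits_of_isAlgClosed_fractionRing K
  exact ⟨.of_forall_monic_splits hsplits,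
    .of_surjective_of_forall_monic_splits residue_surjective hsplits⟩
end

section
/- Let J be an index type and let (V_j)_{j ∈ J} be a family of valuation rings (each a commutative integral domain in which for all a, b, a divides b or b divides a). Let R = Π_{j ∈ J} V_j be the product ring. Then for every prime ideal P of R, the localization R_P of R at P is an integral domain and a valuation ring. -/
/-!
For `a b : Π j, V j`, the idempotent `e` supported on `{j | a j ∣ b j}` satisfies `e * a ∣ e * b`
and `(1 - e) * b ∣ (1 - e) * a`; likewise, if `a * b = 0`, the idempotent supported on
`{j | a j = 0}` kills `a` while `1 - e` kills `b`. In the local ring `R_P` the image of an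
idempotent is `0` or `1`, so one of `e`, `1 - e` becomes `1`; since every element of `R_P` is
associated to the image of an element of `R`, `R_P` is a domain whose divisibility is total.
-/

theorem IsLocalRing.eq_one_or_one_sub_eq_one_of_isIdempotentElem {S : Type*} [CommRing S]
    [IsLocalRing S] {e : S} (he : IsIdempotentElem e) : e = 1 ∨ 1 - e = 1 :=
  (isUnit_or_isUnit_one_sub_self e).imp (fun h ↦ (IsIdempotentElem.iff_eq_one_of_isUnit h).mp he)
    (fun h ↦ (IsIdempotentElem.iff_eq_one_of_isUnit h).mp he.one_sub)

theorem IsLocalization.exists_associated_algebraMap {R : Type*} [CommRing R] (M : Submonoid R)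
    {S : Type*} [CommRing S] [Algebra R S] [IsLocalization M S] (z : S) :
    ∃ a : R, Associated (algebraMap R S a) z := by
  obtain ⟨⟨a, s⟩, h⟩ := IsLocalization.surj M z
  exact ⟨a, Associated.symm ⟨(IsLocalization.map_units S s).unit, h⟩⟩

section SplittingIdempotent

variable {R S : Type*} [CommRing R] [CommRing S] [IsLocalRing S] (φ : R →+* S)

theorem RingHom.map_dvd_or_map_dvd_of_isIdempotentElem {a b e : R} (he : IsIdempotentElem e)
    (hab : e * a ∣ e * b) (hba : (1 - e) * b ∣ (1 - e) * a) : φ a ∣ φ b ∨ φ b ∣ φ a := by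
  have hab := map_dvd φ hab
  have hba := map_dvd φ hba
  simp only [map_mul, map_sub, map_one] at hab hba
  rcases IsLocalRing.eq_one_or_one_sub_eq_one_of_isIdempotentElem (he.map φ) with h | h
  · rw [h, one_mul, one_mul] at hab
    exact .inl hab
  · rw [h, one_mul, one_mul] at hba
    exact .inr hba

theorem RingHom.map_eq_zero_or_map_eq_zero_of_isIdempotentElem {a b e : R}
    (he : IsIdempotentElem e) (ha : e * a = 0) (hb : (1 - e) * b = 0) : φ a = 0 ∨ φ b = 0 := by
  have ha := congrArg φ ha
  have hb := congrArg φ hb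
  simp only [map_mul, map_sub, map_one, map_zero] at ha hb
  rcases IsLocalRing.eq_one_or_one_sub_eq_one_of_isIdempotentElem (he.map φ) with h | h
  · rw [h, one_mul] at ha
    exact .inl ha
  · rw [h, one_mul] at hb
    exact .inr hb

end SplittingIdempotent

namespace IsLocalization

variable {R : Type*} [CommRing R] (M : Submonoid R) (S : Type*) [CommRing S] [Algebra R S]
  [IsLocalRing S]

theorem isDomain_of_isLocalRing [IsLocalization M S]
    (h : ∀ a b : R, a * b = 0 → ∃ e, IsIdempotentElem e ∧ e * a = 0 ∧ (1 - e) * b = 0) :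
    IsDomain S := by
  have : NoZeroDivisors S := by
    refine ⟨fun {x y} hxy ↦ ?_⟩
    obtain ⟨a, hax⟩ := exists_associated_algebraMap M x
    obtain ⟨b, hby⟩ := exists_associated_algebraMap M y
    have hab : algebraMap R S (a * b) = 0 := by
      rw [map_mul, (hax.mul_mul hby).eq_zero_iff]
      exact hxy
    obtain ⟨u, hu⟩ := (map_eq_zero_iff M S _).mp hab
    obtain ⟨e, he, hea, heb⟩ := h (u * a) b (by rw [← hu, mul_assoc])
    rw [← hax.eq_zero_iff, ← hby.eq_zero_iff]
    refine ((algebraMap R S).map_eq_zero_or_map_eq_zero_of_isIdempotentElem he hea heb).imp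
      (fun hua ↦ ?_) id
    rw [map_mul] at hua
    exact (IsUnit.mul_right_eq_zero (map_units S u)).mp hua
  exact NoZeroDivisors.to_isDomain S

theorem valuationRing_of_isLocalRing [IsLocalization M S] [IsDomain S]
    (h : ∀ a b : R, ∃ e, IsIdempotentElem e ∧ e * a ∣ e * b ∧ (1 - e) * b ∣ (1 - e) * a) :
    ValuationRing S := by
  rw [ValuationRing.iff_dvd_total]
  refine ⟨fun x y ↦ ?_⟩
  obtain ⟨a, hax⟩ := exists_associated_algebraMap M x
  obtain ⟨b, hby⟩ := exists_associated_algebraMap M y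
  obtain ⟨e, he, hab, hba⟩ := h a b
  rw [← hax.dvd_iff_dvd_left, ← hax.dvd_iff_dvd_right, ← hby.dvd_iff_dvd_left,
    ← hby.dvd_iff_dvd_right]
  exact (algebraMap R S).map_dvd_or_map_dvd_of_isIdempotentElem he hab hba

end IsLocalization

namespace Pi

variable {J : Type*} {V : J → Type*}

theorem isIdempotentElem_ite [∀ j, MulZeroOneClass (V j)] (p : J → Prop) [DecidablePred p] :
    IsIdempotentElem (fun j ↦ if p j then (1 : V j) else 0) := by
  funext j
  by_cases h : p j <;> simp [h]

variable [∀ j, CommRing (V j)]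

theorem exists_isIdempotentElem_mul_dvd_mul [∀ j, PreValuationRing (V j)] (a b : ∀ j, V j) :
    ∃ e, IsIdempotentElem e ∧ e * a ∣ e * b ∧ (1 - e) * b ∣ (1 - e) * a := by
  classical
  refine ⟨_, isIdempotentElem_ite fun j ↦ a j ∣ b j, pi_dvd_iff.mpr fun j ↦ ?_,
    pi_dvd_iff.mpr fun j ↦ ?_⟩ <;> by_cases h : a j ∣ b j
  all_goals simp [h, (ValuationRing.dvd_total (a j) (b j)).resolve_left]

theorem exists_isIdempotentElem_mul_eq_zero [∀ j, NoZeroDivisors (V j)] {a b : ∀ j, V j}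
    (hab : a * b = 0) : ∃ e, IsIdempotentElem e ∧ e * a = 0 ∧ (1 - e) * b = 0 := by
  classical
  refine ⟨_, isIdempotentElem_ite fun j ↦ a j = 0, funext fun j ↦ ?_, funext fun j ↦ ?_⟩
    <;> by_cases h : a j = 0
  all_goals simp [h, (mul_eq_zero.mp (congrFun hab j)).resolve_left]

end Pi

/-- Every local ring of the spectrum of a product of valuation rings is again a valuation
ring: for a product `R = Π j, V j` of valuation rings and a prime ideal `P` of `R`, the
localization `R_P` is an integral domain and a valuation ring. -/
theorem localization_atPrime_of_pi_valuationRing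
    {J : Type*} (V : J → Type*) [∀ j, CommRing (V j)] [∀ j, IsDomain (V j)]
    [∀ j, ValuationRing (V j)] (P : Ideal (∀ j, V j)) [P.IsPrime] :
    ∃ h : IsDomain (Localization.AtPrime P),
      @ValuationRing (Localization.AtPrime P) inferInstance h := by
  have : IsDomain (Localization.AtPrime P) :=
    IsLocalization.isDomain_of_isLocalRing P.primeCompl _ fun _ _ ↦
      Pi.exists_isIdempotentElem_mul_eq_zero
  exact ⟨this, IsLocalization.valuationRing_of_isLocalRing P.primeCompl _
    Pi.exists_isIdempotentElem_mul_dvd_mul⟩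
end
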